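/- Let n ≥ 1, γ ∈ ℝ, T : ℝ → ℝ, and let F : ℝ^n → ℝ^n be the globally coupled map built from T with coupling γ. Let p ≥ 1 and z ∈ ℝ^n, and suppose T is differentiable at every coordinate of every point F^t(z) for t = 0, 1, …, p−1. Then F^p is differentiable at z and det(D(F^p)(z)) = (1−γ)^{p(n−1)} · ∏_{t=0}^{p−1} ∏_{k=1}^n T'((F^t(z))_k). -/

import Mathlib

open Set

/-- The globally coupled map `F : ℝ^n → ℝ^n` built from a local map `T : ℝ → ℝ` with
coupling strength `γ`: `F(y)_i = (1-γ)·T(y_i) + (γ/n)·∑_j T(y_j)`. -/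
noncomputable def coupledMap (n : ℕ) (γ : ℝ) (T : ℝ → ℝ) :
    (Fin n → ℝ) → (Fin n → ℝ) :=
  fun y i => (1 - γ) * T (y i) + (γ / n) * ∑ j, T (y j)

/-!
`F = M ∘ T^{×n}` with `M = (1-γ)·I + (γ/n)·J` (`J` the all-ones matrix), so by the chain rule
`DF(y) = M · diag(T'(y_k))`. The matrix `M` acts as `1` on constant vectors and as `1-γ` on
their orthogonal complement, hence `det M = (1-γ)^{n-1}`. The determinant of `D(F^p)(z)` is the
product of the determinants of `DF` along the orbit `z, F z, …, F^{p-1} z`.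
-/

open Matrix Finset

theorem Matrix.det_smul_one_add_of_const {K ι : Type*} [Field K] [Fintype ι] [DecidableEq ι]
    {a : K} (ha : a ≠ 0) (c : K) :
    (a • 1 + of fun _ _ : ι => c).det = a ^ Fintype.card ι * (1 + Fintype.card ι * c / a) := by
  have hfactor : a • 1 + of (fun _ _ : ι => c) =
      a • (1 + replicateCol Unit (fun _ : ι => c / a) *
        replicateRow Unit (fun _ : ι => (1 : K))) := by
    ext i j
    simp [mul_add, Matrix.mul_apply, mul_div_cancel₀ _ ha]
  rw [hfactor, det_smul, det_one_add_replicateCol_mul_replicateRow]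
  simp [dotProduct, mul_div_assoc]

noncomputable def couplingMatrix (n : ℕ) (γ : ℝ) : Matrix (Fin n) (Fin n) ℝ :=
  (1 - γ) • 1 + of fun _ _ => γ / n

theorem det_couplingMatrix (n : ℕ) (γ : ℝ) : (couplingMatrix n γ).det = (1 - γ) ^ (n - 1) := by
  -- Both sides are continuous in `γ`, so it suffices to treat `γ ≠ 1`, where the
  -- matrix determinant lemma applies.
  suffices (fun γ => (couplingMatrix n γ).det) = fun γ => (1 - γ) ^ (n - 1) from congrFun this γ
  refine Continuous.ext_on (dense_compl_singleton 1) (by unfold couplingMatrix; fun_prop)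
    (by fun_prop) fun γ (hγ : γ ≠ 1) => ?_
  have ha : 1 - γ ≠ 0 := sub_ne_zero.2 hγ.symm
  rw [couplingMatrix, det_smul_one_add_of_const ha, Fintype.card_fin]
  rcases n with _ | m
  · simp
  · rw [Nat.add_sub_cancel]
    field_simp
    ring

theorem coupledMap_eq_mulVec (n : ℕ) (γ : ℝ) (T : ℝ → ℝ) (y : Fin n → ℝ) :
    coupledMap n γ T y = couplingMatrix n γ *ᵥ fun i => T (y i) := by
  ext i
  simp [coupledMap, couplingMatrix, mulVec, dotProduct, mul_sum, add_mul, sum_add_distrib,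
    one_apply]

theorem hasFDerivAt_pi_map {𝕜 ι : Type*} [NontriviallyNormedField 𝕜] [CompleteSpace 𝕜]
    [Fintype ι] [DecidableEq ι]
    {f : 𝕜 → 𝕜} {y : ι → 𝕜} (hf : ∀ i, DifferentiableAt 𝕜 f (y i)) :
    HasFDerivAt (fun x i => f (x i))
      (LinearMap.toContinuousLinearMap (toLin' (diagonal fun i => deriv f (y i)))) y := by
  refine hasFDerivAt_pi'.2 fun i => ?_
  refine ((hf i).hasDerivAt.comp_hasFDerivAt y (hasFDerivAt_apply i y)).congr_fderiv ?_
  ext v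
  simp [mulVec_diagonal]

theorem hasFDerivAt_coupledMap (n : ℕ) (γ : ℝ) {T : ℝ → ℝ} {y : Fin n → ℝ}
    (hT : ∀ k, DifferentiableAt ℝ T (y k)) :
    HasFDerivAt (coupledMap n γ T) (LinearMap.toContinuousLinearMap
      (toLin' (couplingMatrix n γ * diagonal fun k => deriv T (y k)))) y := by
  set A := LinearMap.toContinuousLinearMap (toLin' (couplingMatrix n γ))
  have hF : coupledMap n γ T = A ∘ fun x i => T (x i) := funext (coupledMap_eq_mulVec n γ T)
  have hL : LinearMap.toContinuousLinearMap
      (toLin' (couplingMatrix n γ * diagonal fun k => deriv T (y k))) =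
      A.comp (LinearMap.toContinuousLinearMap (toLin' (diagonal fun k => deriv T (y k)))) := by
    ext v : 1
    simp [A, toLin'_mul]
  rw [hF, hL]
  exact A.hasFDerivAt.comp y (hasFDerivAt_pi_map hT)

theorem det_fderiv_coupledMap (n : ℕ) (γ : ℝ) {T : ℝ → ℝ} {y : Fin n → ℝ}
    (hT : ∀ k, DifferentiableAt ℝ T (y k)) :
    DifferentiableAt ℝ (coupledMap n γ T) y ∧
      (fderiv ℝ (coupledMap n γ T) y).det = (1 - γ) ^ (n - 1) * ∏ k, deriv T (y k) := by
  have h := hasFDerivAt_coupledMap n γ hT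
  refine ⟨h.differentiableAt, ?_⟩
  rw [h.fderiv, ContinuousLinearMap.det, LinearMap.coe_toContinuousLinearMap, LinearMap.det_toLin',
    det_mul, det_couplingMatrix, det_diagonal]

theorem det_fderiv_iterate {𝕜 E : Type*} [NontriviallyNormedField 𝕜] [NormedAddCommGroup E]
    [NormedSpace 𝕜 E] {f : E → E} {p : ℕ} {z : E}
    (hf : ∀ t < p, DifferentiableAt 𝕜 f (f^[t] z)) :
    DifferentiableAt 𝕜 f^[p] z ∧
      (fderiv 𝕜 f^[p] z).det = ∏ t ∈ range p, (fderiv 𝕜 f (f^[t] z)).det := by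
  induction p with
  | zero => simp [ContinuousLinearMap.det]
  | succ p ih =>
    obtain ⟨hd, hdet⟩ := ih fun t ht => hf t (by omega)
    have hstep := (hf p p.lt_succ_self).hasFDerivAt.comp z hd.hasFDerivAt
    rw [← Function.iterate_succ'] at hstep
    refine ⟨hstep.differentiableAt, ?_⟩
    rw [hstep.fderiv, prod_range_succ, ← hdet, mul_comm]
    exact LinearMap.det_comp _ _

theorem det_fderiv_coupledMap_iterate_general (n : ℕ) (γ : ℝ) (T : ℝ → ℝ)
    (p : ℕ) (z : Fin n → ℝ)
    (hdiff : ∀ t < p, ∀ k : Fin n,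
      DifferentiableAt ℝ T (((coupledMap n γ T)^[t] z) k)) :
    DifferentiableAt ℝ ((coupledMap n γ T)^[p]) z ∧
      (fderiv ℝ ((coupledMap n γ T)^[p]) z).det =
        (1 - γ) ^ (p * (n - 1)) *
          ∏ t ∈ Finset.range p, ∏ k : Fin n, deriv T (((coupledMap n γ T)^[t] z) k) := by
  have hstep := fun t (ht : t < p) => det_fderiv_coupledMap n γ (hdiff t ht)
  obtain ⟨hd, hdet⟩ := det_fderiv_iterate fun t ht => (hstep t ht).1
  refine ⟨hd, ?_⟩
  rw [hdet, prod_congr rfl fun t ht => (hstep t (mem_range.1 ht)).2, prod_mul_distrib, prod_const,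
    card_range, pow_mul']

/-- if `T` is differentiable at every coordinate of every orbit point
`F^t(z)`, `t = 0,…,p−1`, then `F^p` is differentiable at `z` and
`det D(F^p)(z) = (1−γ)^{p(n−1)} · ∏_{t<p} ∏_k T'((F^t(z))_k)`. -/
theorem det_fderiv_coupledMap_iterate (n : ℕ) (hn : 1 ≤ n) (γ : ℝ) (T : ℝ → ℝ)
    (p : ℕ) (hp : 1 ≤ p) (z : Fin n → ℝ)
    (hdiff : ∀ t < p, ∀ k : Fin n,
      DifferentiableAt ℝ T (((coupledMap n γ T)^[t] z) k)) :
    DifferentiableAt ℝ ((coupledMap n γ T)^[p]) z ∧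
      (fderiv ℝ ((coupledMap n γ T)^[p]) z).det =
        (1 - γ) ^ (p * (n - 1)) *
          ∏ t ∈ Finset.range p, ∏ k : Fin n, deriv T (((coupledMap n γ T)^[t] z) k) :=
  det_fderiv_coupledMap_iterate_general n γ T p z hdiff
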